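/- Let K be a commutative ring, P a finite poset, and x < z in P such that every y with x < y < z satisfies: y covers x and z covers y. Then Σ_{x<y<z} b_x^y∘b_y^z = −(∂∘b_x^z + b_x^z∘∂) as maps C_{n+2}(z) → C_n(x) for every n; in particular the morphism of complexes Σ_{x<y<z} b_x^y∘b_y^z : C_{•+2}(z) → C_•(x) is chain homotopic to zero. -/

import Mathlib

open Finsupp

/-- A strictly increasing chain of `n + 1` elements of `P` ending at `x`;
this models the chains `[x₁ < ⋯ < x_{n+1} = x]` of length `n + 1`. -/
def PChain (P : Type*) [PartialOrder P] (n : ℕ) (x : P) : Type _ :=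
  {f : Fin (n + 1) → P // StrictMono f ∧ f (Fin.last n) = x}

/-- `CC K P n x` is the free `K`-module on chains of `n + 1` elements ending at `x`;
it models the module `C_{n+1}(x)` of the paper. -/
abbrev CC (K : Type*) [CommRing K] (P : Type*) [PartialOrder P] (n : ℕ) (x : P) :=
  PChain P n x →₀ K

namespace PChain

variable {P : Type*} [PartialOrder P]

/-- Remove the entry at position `i` of a chain (never the last position). -/
def remove {n : ℕ} {x : P} (f : PChain P (n + 1) x) (i : Fin (n + 1)) : PChain P n x :=
  ⟨f.1 ∘ (Fin.castSucc i).succAbove, f.2.1.comp (Fin.strictMono_succAbove _), by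
    have h : (Fin.castSucc i).succAbove (Fin.last n) = Fin.last (n + 1) := by
      rw [Fin.succAbove_of_le_castSucc _ _
        (Fin.castSucc_le_castSucc_iff.mpr (Fin.le_last i))]
      exact Fin.succ_last n
    show f.1 _ = x
    rw [h, f.2.2]⟩

/-- Prepend an element `a` below the first entry of a chain. -/
def prepend {n : ℕ} {x : P} (f : PChain P n x) (a : P) (h : a < f.1 0) :
    PChain P (n + 1) x := by
  refine ⟨Fin.cons a f.1, ?_, ?_⟩
  · rw [Fin.strictMono_iff_lt_succ]
    intro i
    refine Fin.cases ?_ (fun j => ?_) i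
    · simpa using h
    · rw [← Fin.succ_castSucc, Fin.cons_succ, Fin.cons_succ]
      exact f.2.1 (Fin.castSucc_lt_succ : Fin.castSucc j < j.succ)
  · exact f.2.2

/-- Drop the last entry of a chain, whose second-to-last entry is `x`. -/
def truncate {n : ℕ} {y : P} (f : PChain P (n + 1) y) {x : P}
    (h : f.1 (Fin.castSucc (Fin.last n)) = x) : PChain P n x :=
  ⟨f.1 ∘ Fin.castSucc, f.2.1.comp Fin.strictMono_castSucc, h⟩

/-- Drop the last two entries of a chain, whose third-to-last entry is `x`. -/
def truncate2 {n : ℕ} {y : P} (f : PChain P (n + 2) y) {x : P}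
    (h : f.1 ((Fin.last n).castSucc.castSucc) = x) : PChain P n x :=
  ⟨f.1 ∘ fun i => (Fin.castSucc (Fin.castSucc i)),
    f.2.1.comp (Fin.strictMono_castSucc.comp Fin.strictMono_castSucc), h⟩

end PChain

/-- The boundary map `∂ : C_{n+2}(x) → C_{n+1}(x)`. -/
noncomputable def bdry (K : Type*) [CommRing K] {P : Type*} [PartialOrder P] (n : ℕ) (x : P) :
    CC K P (n + 1) x →ₗ[K] CC K P n x :=
  Finsupp.lsum K fun f => LinearMap.toSpanSingleton K (CC K P n x)
    (∑ i : Fin (n + 1), ((-1 : K) ^ (i : ℕ)) • Finsupp.single (f.remove i) (1 : K))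

open Classical in
/-- The contracting homotopy `c`, prepending the least element `a`. -/
noncomputable def contra (K : Type*) [CommRing K] {P : Type*} [PartialOrder P] (a : P)
    (n : ℕ) (x : P) : CC K P n x →ₗ[K] CC K P (n + 1) x :=
  Finsupp.lsum K fun f => LinearMap.toSpanSingleton K (CC K P (n + 1) x)
    (if h : a < f.1 0 then Finsupp.single (f.prepend a h) (1 : K) else 0)

open Classical in
/-- The connecting map `b_x^y : C_{n+2}(y) → C_{n+1}(x)`. -/
noncomputable def bmap (K : Type*) [CommRing K] {P : Type*} [PartialOrder P] (x y : P)
    (n : ℕ) : CC K P (n + 1) y →ₗ[K] CC K P n x :=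
  Finsupp.lsum K fun f => LinearMap.toSpanSingleton K (CC K P n x)
    (if h : f.1 (Fin.castSucc (Fin.last n)) = x then
      ((-1 : K) ^ (n + 1)) • Finsupp.single (f.truncate h) (1 : K)
    else 0)

section Aux

variable {K : Type*} [CommRing K] {P : Type*} [PartialOrder P]

open Classical in
lemma bmap_single (x y : P) (n : ℕ) (f : PChain P (n + 1) y) (c : K) :
    bmap K x y n (Finsupp.single f c) =
      c • (if h : f.1 (Fin.castSucc (Fin.last n)) = x then
        ((-1 : K) ^ (n + 1)) • Finsupp.single (f.truncate h) (1 : K) else 0) := by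
  rw [bmap, Finsupp.lsum_single, LinearMap.toSpanSingleton_apply]

lemma bdry_single (x : P) (n : ℕ) (f : PChain P (n + 1) x) (c : K) :
    bdry K n x (Finsupp.single f c) =
      c • ∑ i : Fin (n + 1), ((-1 : K) ^ (i : ℕ)) • Finsupp.single (f.remove i) (1 : K) := by
  rw [bdry, Finsupp.lsum_single, LinearMap.toSpanSingleton_apply]

lemma idx1 (n : ℕ) :
    (Fin.castSucc (Fin.last (n + 1))).succAbove (Fin.castSucc (Fin.last n))
      = (Fin.last n).castSucc.castSucc := by
  rw [Fin.succAbove_of_castSucc_lt]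
  simp [Fin.lt_def]

lemma idx2 (n : ℕ) (j : Fin (n + 1)) :
    (Fin.castSucc (Fin.castSucc j)).succAbove (Fin.castSucc (Fin.last n))
      = (Fin.last (n + 1)).castSucc := by
  rw [Fin.succAbove_of_le_castSucc]
  · ext; simp
  · have := j.isLt
    simp [Fin.le_def]
    omega

lemma idx3 (n : ℕ) (i : Fin (n + 1)) :
    (Fin.castSucc (Fin.last (n + 1))).succAbove (Fin.castSucc i)
      = (Fin.castSucc i).castSucc := by
  rw [Fin.succAbove_of_castSucc_lt]
  have := i.isLt
  simp [Fin.lt_def]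
  omega

end Aux

/-- Let `x < z` in a finite poset `P` be such that every `y` strictly between
`x` and `z` satisfies `x ⋖ y` and `y ⋖ z`.  Then
`Σ_{x<y<z} b_x^y ∘ b_y^z = -(∂ ∘ b_x^z + b_x^z ∘ ∂)` as maps `C_{n+2}(z) → C_n(x)` in every
degree; in particular the morphism of complexes `Σ_{x<y<z} b_x^y ∘ b_y^z` is chain homotopic
to zero.  Recall `CC K P n w` models `C_{n+1}(w)`; the remaining degrees are trivial since
`C_n(x) = 0` for `n ≤ 0`. -/
theorem statement_4 (K : Type*) [CommRing K] (P : Type*) [PartialOrder P] [Fintype P]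
    (x z : P) (hxz : x < z) (hcov : ∀ y : P, x < y → y < z → (x ⋖ y ∧ y ⋖ z)) :
    ∀ n : ℕ,
      (∑ᶠ (y : P) (_ : x < y ∧ y < z), bmap K x y n ∘ₗ bmap K y z (n + 1))
        = -(bdry K n x ∘ₗ bmap K x z (n + 1) + bmap K x z n ∘ₗ bdry K (n + 1) z) := by
  classical
  intro n
  have hfin : (∑ᶠ (y : P) (_ : x < y ∧ y < z), bmap K x y n ∘ₗ bmap K y z (n + 1))
      = ∑ y : P, if x < y ∧ y < z then bmap K x y n ∘ₗ bmap K y z (n + 1) else 0 := by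
    rw [finsum_eq_sum_of_fintype]
    exact Finset.sum_congr rfl fun y _ => finsum_eq_if
  rw [hfin]
  refine Finsupp.lhom_ext fun f c => ?_
  have hABlt : f.1 ((Fin.last n).castSucc.castSucc) < f.1 ((Fin.last (n + 1)).castSucc) :=
    f.2.1 (by rw [Fin.lt_def]; simp)
  have hBz : f.1 ((Fin.last (n + 1)).castSucc) < z := by
    conv_rhs => rw [← f.2.2]
    exact f.2.1 (Fin.castSucc_lt_last _)
  have hsq : ((-1 : K) ^ (n + 1)) * ((-1 : K) ^ (n + 1)) = 1 := by
    rw [← pow_add]; exact Even.neg_one_pow ⟨n + 1, by ring⟩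
  have hsgn : ((-1 : K) ^ (n + 1 + 1)) * ((-1 : K) ^ (n + 1)) = -1 := by
    rw [← pow_add]; exact Odd.neg_one_pow ⟨n + 1, by ring⟩
  simp only [LinearMap.neg_apply, LinearMap.add_apply, LinearMap.comp_apply]
  by_cases hA : f.1 ((Fin.last n).castSucc.castSucc) = x
  · -- Case: third-to-last entry is x
    have hBx : f.1 ((Fin.last (n + 1)).castSucc) ≠ x := by rw [← hA]; exact hABlt.ne'
    have hrA : (f.remove (Fin.last (n + 1))).1 (Fin.castSucc (Fin.last n)) = x := by
      show f.1 _ = x; rw [idx1]; exact hA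
    have hLHS : (∑ y : P, if x < y ∧ y < z then bmap K x y n ∘ₗ bmap K y z (n + 1) else 0)
        (Finsupp.single f c) = (-c) • Finsupp.single (f.truncate2 hA) (1 : K) := by
      rw [LinearMap.sum_apply]
      rw [Finset.sum_eq_single (f.1 ((Fin.last (n + 1)).castSucc))]
      · rw [if_pos ⟨hA ▸ hABlt, hBz⟩, LinearMap.comp_apply, bmap_single, dif_pos rfl,
          map_smul, map_smul, bmap_single,
          dif_pos (show (f.truncate rfl).1 (Fin.castSucc (Fin.last n)) = x from hA)]
        rw [show (f.truncate rfl).truncate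
            (show (f.truncate rfl).1 (Fin.castSucc (Fin.last n)) = x from hA)
            = f.truncate2 hA from Subtype.ext (funext fun i => rfl)]
        simp only [smul_smul, one_mul]
        rw [hsgn, mul_neg_one]
      · intro y _ hy
        rw [apply_ite (fun g : CC K P (n + 2) z →ₗ[K] CC K P n x => g (Finsupp.single f c))]
        rw [LinearMap.comp_apply, bmap_single, dif_neg (fun hh => hy hh.symm)]
        simp
      · intro h; exact absurd (Finset.mem_univ _) h
    have hR1 : bmap K x z (n + 1) (Finsupp.single f c) = 0 := by
      rw [bmap_single, dif_neg hBx, smul_zero]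
    have hR2 : bmap K x z n (bdry K (n + 1) z (Finsupp.single f c))
        = c • Finsupp.single (f.truncate2 hA) (1 : K) := by
      rw [bdry_single, map_smul, map_sum, Fin.sum_univ_castSucc]
      have hz0 : ∀ j : Fin (n + 1),
          bmap K x z n (((-1 : K) ^ ((Fin.castSucc j : Fin (n + 2)) : ℕ)) •
            Finsupp.single (f.remove (Fin.castSucc j)) (1 : K)) = 0 := by
        intro j
        have hj : (f.remove (Fin.castSucc j)).1 (Fin.castSucc (Fin.last n)) ≠ x := by
          show f.1 _ ≠ x; rw [idx2]; exact hBx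
        rw [map_smul, bmap_single, dif_neg hj]; simp
      rw [Finset.sum_eq_zero fun j _ => hz0 j, zero_add, map_smul, bmap_single, dif_pos hrA]
      rw [show (f.remove (Fin.last (n + 1))).truncate hrA = f.truncate2 hA from
        Subtype.ext (funext fun i => congrArg f.1 (idx3 n i))]
      simp only [smul_smul, one_mul, Fin.val_last]
      rw [hsq, mul_one]
    rw [hLHS, hR1, map_zero, hR2, zero_add, ← neg_smul]
  · -- Case: third-to-last entry is not x
    have hLHS : (∑ y : P, if x < y ∧ y < z then bmap K x y n ∘ₗ bmap K y z (n + 1) else 0)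
        (Finsupp.single f c) = 0 := by
      rw [LinearMap.sum_apply]
      refine Finset.sum_eq_zero fun y _ => ?_
      rw [apply_ite (fun g : CC K P (n + 2) z →ₗ[K] CC K P n x => g (Finsupp.single f c))]
      rw [LinearMap.comp_apply, bmap_single]
      by_cases hB : f.1 (Fin.castSucc (Fin.last (n + 1))) = y
      · rw [dif_pos hB, map_smul, map_smul, bmap_single,
          dif_neg (show ¬(f.truncate hB).1 (Fin.castSucc (Fin.last n)) = x from hA)]
        simp
      · rw [dif_neg hB]; simp
    rw [hLHS]
    by_cases hB : f.1 (Fin.castSucc (Fin.last (n + 1))) = x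
    · have h1 : bdry K n x (bmap K x z (n + 1) (Finsupp.single f c))
          = c • ((-1 : K) ^ (n + 1 + 1)) •
            ∑ j : Fin (n + 1), ((-1 : K) ^ (j : ℕ)) •
              Finsupp.single ((f.truncate hB).remove j) (1 : K) := by
        rw [bmap_single, dif_pos hB, map_smul, map_smul, bdry_single, one_smul]
      have h2 : bmap K x z n (bdry K (n + 1) z (Finsupp.single f c))
          = c • ∑ j : Fin (n + 1), ((-1 : K) ^ (j : ℕ) * (-1 : K) ^ (n + 1)) •
              Finsupp.single ((f.truncate hB).remove j) (1 : K) := by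
        rw [bdry_single, map_smul, map_sum]
        congr 1
        rw [Fin.sum_univ_castSucc]
        have hlast : (f.remove (Fin.last (n + 1))).1 (Fin.castSucc (Fin.last n)) ≠ x := by
          show f.1 _ ≠ x; rw [idx1]; exact hA
        rw [map_smul, bmap_single, dif_neg hlast]
        simp only [smul_zero, add_zero]
        refine Finset.sum_congr rfl fun j _ => ?_
        have hcond : (f.remove (Fin.castSucc j)).1 (Fin.castSucc (Fin.last n)) = x := by
          show f.1 _ = x; rw [idx2]; exact hB
        rw [map_smul, bmap_single, dif_pos hcond]
        rw [show (f.remove (Fin.castSucc j)).truncate hcond = (f.truncate hB).remove j from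
          Subtype.ext (funext fun i => congrArg f.1 Fin.castSucc_succAbove_castSucc)]
        simp only [smul_smul, one_mul, Fin.coe_castSucc]
      rw [h1, h2, ← smul_add, Finset.smul_sum, ← Finset.sum_add_distrib]
      rw [Finset.sum_eq_zero, smul_zero, neg_zero]
      intro j _
      rw [smul_smul, ← add_smul]
      have : ((-1 : K) ^ (n + 1 + 1) * (-1 : K) ^ (j : ℕ)
          + (-1 : K) ^ (j : ℕ) * (-1 : K) ^ (n + 1)) = 0 := by
        have hp : ((-1 : K) ^ (n + 1 + 1)) = -((-1 : K) ^ (n + 1)) := by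
          rw [pow_succ]; ring
        rw [hp]; ring
      rw [this, zero_smul]
    · have h1 : bmap K x z (n + 1) (Finsupp.single f c) = 0 := by
        rw [bmap_single, dif_neg hB, smul_zero]
      have h2 : bmap K x z n (bdry K (n + 1) z (Finsupp.single f c)) = 0 := by
        rw [bdry_single, map_smul, map_sum, Fin.sum_univ_castSucc]
        have hlast : (f.remove (Fin.last (n + 1))).1 (Fin.castSucc (Fin.last n)) ≠ x := by
          show f.1 _ ≠ x; rw [idx1]; exact hA
        have hz0 : ∀ j : Fin (n + 1),
            bmap K x z n (((-1 : K) ^ ((Fin.castSucc j : Fin (n + 2)) : ℕ)) •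
              Finsupp.single (f.remove (Fin.castSucc j)) (1 : K)) = 0 := by
          intro j
          have hj : (f.remove (Fin.castSucc j)).1 (Fin.castSucc (Fin.last n)) ≠ x := by
            show f.1 _ ≠ x; rw [idx2]; exact hB
          rw [map_smul, bmap_single, dif_neg hj]; simp
        rw [Finset.sum_eq_zero fun j _ => hz0 j, zero_add, map_smul, bmap_single,
          dif_neg hlast]
        simp
      rw [h1, map_zero, h2, add_zero, neg_zero]
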